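/- arXiv:math/0605314 — 6 statements merged into one kernel-verified Lean document; each statement's English description precedes it below -/
import Mathlib

section
/- Let ζ be a primitive n-th root of unity, Φ_n(q) ∈ ℤ[q] the n-th cyclotomic polynomial, f(q) ∈ ℤ[q], and k ≥ 0. Then Φ_n(q)^k divides f(q) in ℤ[q] if and only if (q−ζ)^k divides f(q) in ℤ[ζ][q]. -/
open Polynomial

theorem stmt1 (n : ℕ) (hn : 0 < n) (ζ : ℂ) (hζ : IsPrimitiveRoot ζ n)
    (f : Polynomial ℤ) (k : ℕ) :
    (Polynomial.cyclotomic n ℤ) ^ k ∣ f ↔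
      (X - C (⟨ζ, Algebra.subset_adjoin (Set.mem_singleton ζ)⟩ :
          Algebra.adjoin ℤ ({ζ} : Set ℂ))) ^ k ∣
        f.map (algebraMap ℤ (Algebra.adjoin ℤ ({ζ} : Set ℂ))) := by
  set R := Algebra.adjoin ℤ ({ζ} : Set ℂ)
  set ζ' : R := ⟨ζ, Algebra.subset_adjoin (Set.mem_singleton ζ)⟩
  have hval : Function.Injective (R.val : R →ₐ[ℤ] ℂ) := Subtype.val_injective
  have hζ' : IsPrimitiveRoot ζ' n := by
    apply IsPrimitiveRoot.of_map_of_injective (f := (R.val : R →ₐ[ℤ] ℂ)) _ hval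
    exact hζ
  -- ζ' is a root of the cyclotomic polynomial over R
  have hroot : ((cyclotomic n ℤ).map (algebraMap ℤ R)).IsRoot ζ' := by
    rw [map_cyclotomic]
    exact hζ'.isRoot_cyclotomic hn
  have hdvd1 : (X - C ζ') ∣ (cyclotomic n ℤ).map (algebraMap ℤ R) :=
    dvd_iff_isRoot.mpr hroot
  -- (X - ζ')^2 does not divide the cyclotomic polynomial
  have hnot2 : ¬ (X - C ζ') ^ 2 ∣ (cyclotomic n ℤ).map (algebraMap ℤ R) := by
    intro h2
    have h2' : (X - C ζ) ^ 2 ∣ (X : ℂ[X]) ^ n - 1 := by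
      have := map_dvd (mapRingHom (R.val : R →+* ℂ)) h2
      simp only [coe_mapRingHom, Polynomial.map_pow, Polynomial.map_sub, map_X, map_C,
        Polynomial.map_map] at this
      have : (X - C ζ) ^ 2 ∣ (cyclotomic n ℂ) := by
        have heq : ((R.val : R →+* ℂ).comp (algebraMap ℤ R)) = algebraMap ℤ ℂ := by
          ext x
          simp
        rw [heq, map_cyclotomic] at this
        exact this
      exact this.trans (cyclotomic.dvd_X_pow_sub_one n ℂ)
    have hsf : Squarefree ((X : ℂ[X]) ^ n - 1) := by
      have : ((X : ℂ[X]) ^ n - C 1).Separable :=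
        Polynomial.separable_X_pow_sub_C 1 (by exact_mod_cast hn.ne') one_ne_zero
      simpa using this.squarefree
    rw [sq] at h2'
    exact (Polynomial.not_isUnit_X_sub_C ζ) (hsf _ h2')
  -- if aeval ζ g = 0 then cyclotomic n ℤ ∣ g
  have key : ∀ g : Polynomial ℤ, aeval ζ g = 0 → cyclotomic n ℤ ∣ g := by
    intro g hg
    rw [cyclotomic_eq_minpoly hζ hn]
    exact minpoly.isIntegrallyClosed_dvd (hζ.isIntegral hn) hg
  constructor
  · rintro ⟨g, rfl⟩
    rw [Polynomial.map_mul, Polynomial.map_pow]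
    exact Dvd.dvd.mul_right (pow_dvd_pow_of_dvd hdvd1 k) _
  · induction k generalizing f with
    | zero => simp
    | succ k ih =>
      intro h
      obtain ⟨g, rfl⟩ := ih f ((pow_dvd_pow _ (Nat.le_succ k)).trans h)
      rw [Polynomial.map_mul, Polynomial.map_pow] at h
      obtain ⟨h', hh'⟩ := hdvd1
      rw [hh', mul_pow, pow_succ, mul_assoc] at h
      have hXz : (X - C ζ') ^ k ≠ 0 := pow_ne_zero _ (X_sub_C_ne_zero ζ')
      have h2 : (X - C ζ') ∣ h' ^ k * g.map (algebraMap ℤ R) := by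
        rcases h with ⟨c, hc⟩
        refine ⟨c, mul_left_cancel₀ hXz ?_⟩
        rw [hc]; ring
      have hprime : Prime (X - C ζ') := prime_X_sub_C ζ'
      have hg' : (X - C ζ') ∣ g.map (algebraMap ℤ R) := by
        rcases hprime.dvd_or_dvd h2 with h3 | h3
        · exfalso
          apply hnot2
          obtain ⟨d, hd⟩ := hprime.dvd_of_dvd_pow h3
          rw [hh', hd, sq]
          exact ⟨d, by ring⟩
        · exact h3
      have hgz : aeval ζ g = 0 := by
        have := dvd_iff_isRoot.mp hg'
        have h4 : aeval ζ' g = 0 := by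
          rwa [IsRoot.def, eval_map, ← aeval_def] at this
        show aeval ((R.val : R →ₐ[ℤ] ℂ) ζ') g = 0
        rw [aeval_algHom_apply, h4, map_zero]
      obtain ⟨g', rfl⟩ := key g hgz
      exact ⟨g', by ring⟩
end

section
/- For every n ≥ 0, the formal derivative d/dq of (q)_{2n} = (1−q)(1−q²)⋯(1−q^{2n}) lies in the ideal (q)_n·ℤ[q], i.e. it is divisible by (1−q)(1−q²)⋯(1−qⁿ) in ℤ[q]. -/
open Polynomial

lemma aux_dvd (a m : ℕ) : (1 - (X : Polynomial ℤ) ^ a) ∣ (1 - X ^ (a * m)) := by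
  have h := sub_dvd_pow_sub_pow (1 : Polynomial ℤ) (X ^ a) m
  simpa [pow_mul, one_pow] using h

lemma derivative_finset_prod {ι : Type*} [DecidableEq ι] (s : Finset ι) (f : ι → Polynomial ℤ) :
    derivative (∏ j ∈ s, f j) =
      ∑ i ∈ s, (∏ j ∈ s.erase i, f j) * derivative (f i) := by
  rw [Finset.prod, derivative_prod, Finset.sum]
  congr 1

theorem stmt2 (n : ℕ) :
    (∏ j ∈ Finset.range n, (1 - (X : Polynomial ℤ) ^ (j + 1))) ∣
      Polynomial.derivative
        (∏ j ∈ Finset.range (2 * n), (1 - (X : Polynomial ℤ) ^ (j + 1))) := by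
  rw [derivative_finset_prod]
  apply Finset.dvd_sum
  intro i hi
  apply Dvd.dvd.mul_right
  rw [Finset.mem_range] at hi
  by_cases h : n ≤ i
  · apply Finset.prod_dvd_prod_of_subset
    intro j hj
    rw [Finset.mem_range] at hj
    rw [Finset.mem_erase, Finset.mem_range]
    omega
  · push_neg at h
    set f : ℕ → Polynomial ℤ := fun j => 1 - (X : Polynomial ℤ) ^ (j + 1) with hf
    set q := n / (i + 1) with hq
    set r := n % (i + 1) with hr
    have hdm : (i + 1) * q + r = n := Nat.div_add_mod n (i + 1)
    have hrlt : r < i + 1 := Nat.mod_lt _ (Nat.succ_pos i)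
    set k := (i + 1) * (q + 1) - 1 with hk
    have hk1 : k + 1 = (i + 1) * q + (i + 1) := by
      have : (i + 1) * (q + 1) = (i + 1) * q + (i + 1) := by ring
      omega
    have hkn : n ≤ k := by omega
    have hk2n : k < 2 * n := by omega
    have hki : k ≠ i := by omega
    have hdvd : f i ∣ f k := by
      have hmul : k + 1 = (i + 1) * (q + 1) := by
        have : (i + 1) * (q + 1) = (i + 1) * q + (i + 1) := by ring
        omega
      rw [hf]
      simpa [hmul] using aux_dvd (i + 1) (q + 1)
    have hi' : i ∈ Finset.range n := Finset.mem_range.2 h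
    have hknm : k ∉ (Finset.range n).erase i := by
      rw [Finset.mem_erase, Finset.mem_range]
      omega
    have hsub : insert k ((Finset.range n).erase i) ⊆ (Finset.range (2 * n)).erase i := by
      intro j hj
      rw [Finset.mem_insert, Finset.mem_erase, Finset.mem_range] at hj
      rw [Finset.mem_erase, Finset.mem_range]
      omega
    calc (∏ j ∈ Finset.range n, f j)
        = f i * ∏ j ∈ (Finset.range n).erase i, f j :=
          (Finset.mul_prod_erase _ _ hi').symm
      _ ∣ f k * ∏ j ∈ (Finset.range n).erase i, f j := mul_dvd_mul_right hdvd _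
      _ = ∏ j ∈ insert k ((Finset.range n).erase i), f j :=
          (Finset.prod_insert hknm).symm
      _ ∣ ∏ j ∈ (Finset.range (2 * n)).erase i, f j :=
          Finset.prod_dvd_prod_of_subset _ _ _ hsub
end

section
/- Let v be an indeterminate, q = v². Define Chebyshev-type polynomials V_n ∈ ℤ[v,v⁻¹][x] by V_0 = 1, V_1 = x, V_n = x·V_{n−1} − V_{n−2}, and P_n = ∏_{i=0}^{n−1}(x − v^{2i+1} − v^{−2i−1}). Then for all n ≥ 0, V_n = Σ_{i=0}^{n} [n+i+1 choose 2i+1] · P_i, where [a choose b] = ({a}{a−1}⋯{a−b+1})/({b}{b−1}⋯{1}) is the balanced q-binomial coefficient with {i} = v^i − v^{−i}. -/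
/-- `v`, an indeterminate, as an element of the field `ℚ(v)` of rational functions. -/
noncomputable def vv : RatFunc ℚ := RatFunc.X

/-- The balanced `q`-integer `{m} = v^m - v^{-m}`. -/
noncomputable def bk (m : ℤ) : RatFunc ℚ := vv ^ m - vv ^ (-m)

/-- The falling product `{a}_i = {a}{a-1}⋯{a-i+1}`. -/
noncomputable def bkp (a : ℤ) (i : ℕ) : RatFunc ℚ := ∏ j ∈ Finset.range i, bk (a - j)

/-- The balanced factorial `{n}! = {n}{n-1}⋯{1}`. -/
noncomputable def bfact (n : ℕ) : RatFunc ℚ := bkp n n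

/-- The balanced binomial coefficient `[a choose b] = {a}_b / {b}!`. -/
noncomputable def bbinom (a : ℤ) (b : ℕ) : RatFunc ℚ := bkp a b / bfact b

/-- Chebyshev-type polynomials `V_0 = 1`, `V_1 = x`, `V_n = x V_{n-1} - V_{n-2}`. -/
noncomputable def chebV : ℕ → Polynomial (RatFunc ℚ)
  | 0 => 1
  | 1 => Polynomial.X
  | (n + 2) => Polynomial.X * chebV (n + 1) - chebV n

/-- `P_n = ∏_{i=0}^{n-1} (x - v^{2i+1} - v^{-2i-1})`. -/
noncomputable def PP (n : ℕ) : Polynomial (RatFunc ℚ) :=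
  ∏ i ∈ Finset.range n,
    (Polynomial.X - Polynomial.C (vv ^ (2 * i + 1) + vv ^ (-(2 * (i : ℤ) + 1))))

/-!
In the basis `P_i` multiplication by `x` is bidiagonal: `x P_i = P_{i+1} + (v^{2i+1} + v^{-2i-1}) P_i`.
So the right-hand side obeys the Chebyshev recurrence as soon as its coefficients
`c(n, i) = [n+i+1 choose 2i+1]` obey
`c(n+2, i+1) = c(n+1, i) + (v^{2i+3} + v^{-2i-3}) c(n+1, i+1) - c(n, i+1)`
(and `c(n+2, 0) = (v + v⁻¹) c(n+1, 0) - c(n, 0)`). Cancelling the factors the three binomials share,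
this is the Laurent-monomial identity `{a+1}{a} + {a-k+1}{a-k} = {k}{k-1} + (v^k + v^{-k}){a}{a-k+1}`.
-/

open Polynomial Finset

lemma vv_ne_zero : vv ≠ 0 := RatFunc.X_ne_zero

noncomputable def bkPlus (m : ℤ) : RatFunc ℚ := vv ^ m + vv ^ (-m)

lemma bk_zero : bk 0 = 0 := by simp [bk]

lemma bk_ne_zero {m : ℤ} (hm : 0 < m) : bk m ≠ 0 := by
  lift m to ℕ using hm.le
  intro h
  rw [bk, sub_eq_zero, zpow_neg, ← mul_eq_one_iff_eq_inv₀ (zpow_ne_zero _ vv_ne_zero),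
    zpow_natCast, ← pow_add] at h
  have hX : (X : ℚ[X]) ^ (m + m) = 1 :=
    RatFunc.algebraMap_injective ℚ (by simpa [vv, RatFunc.algebraMap_X] using h)
  have := congrArg natDegree hX
  simp only [natDegree_X_pow, natDegree_one] at this
  omega

lemma bk_add_one_add_bk_sub_one (a : ℤ) : bk (a + 1) + bk (a - 1) = bkPlus 1 * bk a := by
  have hv := vv_ne_zero
  have ha : vv ^ a ≠ 0 := zpow_ne_zero _ hv
  simp only [bk, bkPlus, zpow_add₀ hv, zpow_sub₀ hv, zpow_neg, zpow_one]
  field_simp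
  ring

lemma bk_add_one_mul_bk_add_bk_sub_add_one_mul_bk_sub (a k : ℤ) :
    bk (a + 1) * bk a + bk (a - k + 1) * bk (a - k)
      = bk k * bk (k - 1) + bkPlus k * (bk a * bk (a - k + 1)) := by
  have hv := vv_ne_zero
  have ha : vv ^ a ≠ 0 := zpow_ne_zero _ hv
  have hk : vv ^ k ≠ 0 := zpow_ne_zero _ hv
  simp only [bk, bkPlus, zpow_add₀ hv, zpow_sub₀ hv, zpow_neg, zpow_one]
  field_simp
  ring

lemma bkp_succ (a : ℤ) (b : ℕ) : bkp a (b + 1) = bkp a b * bk (a - b) :=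
  prod_range_succ _ _

lemma bkp_succ' (a : ℤ) (b : ℕ) : bkp a (b + 1) = bk a * bkp (a - 1) b := by
  rw [bkp, prod_range_succ', mul_comm]
  simp only [bkp, Nat.cast_zero, sub_zero, Nat.cast_succ, sub_add_eq_sub_sub_swap]

lemma bfact_succ (n : ℕ) : bfact (n + 1) = bk (n + 1) * bfact n := by
  rw [bfact, bkp_succ', Nat.cast_succ, add_sub_cancel_right, bfact]

lemma bfact_ne_zero (n : ℕ) : bfact n ≠ 0 := by
  rw [bfact, bkp, prod_ne_zero_iff]
  exact fun j hj => bk_ne_zero (by rw [mem_range] at hj; omega)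

lemma bbinom_self (m : ℕ) : bbinom m m = 1 := div_self (bfact_ne_zero m)

lemma bbinom_eq_zero_of_lt {a b : ℕ} (h : a < b) : bbinom a b = 0 := by
  rw [bbinom, bkp, prod_eq_zero (mem_range.2 h) (by rw [sub_self, bk_zero]), zero_div]

lemma bbinom_one (a : ℤ) : bbinom a 1 = bk a / bk 1 := by
  simp [bbinom, bfact, bkp]

lemma bbinom_add_one_one_add_bbinom_sub_one_one (a : ℤ) :
    bbinom (a + 1) 1 + bbinom (a - 1) 1 = bkPlus 1 * bbinom a 1 := by
  rw [bbinom_one, bbinom_one, bbinom_one, ← add_div, bk_add_one_add_bk_sub_one, mul_div_assoc]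

lemma bbinom_add_one_add_bbinom_sub_one (a : ℤ) (K : ℕ) :
    bbinom (a + 1) (K + 2) + bbinom (a - 1) (K + 2)
      = bbinom (a - 1) K + bkPlus (K + 2) * bbinom a (K + 2) := by
  set k : ℤ := K + 2 with hk_def
  have hup : bkp (a + 1) (K + 2) = bk (a + 1) * bk a * bkp (a - 1) K := by
    rw [bkp_succ', add_sub_cancel_right, bkp_succ', mul_assoc]
  have hdown : bkp (a - 1) (K + 2) = bk (a - k + 1) * bk (a - k) * bkp (a - 1) K := by
    rw [bkp_succ, bkp_succ, hk_def]
    push_cast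
    ring_nf
  have hmid : bkp a (K + 2) = bk a * bk (a - k + 1) * bkp (a - 1) K := by
    rw [bkp_succ', bkp_succ, hk_def]
    ring_nf
  have hfact : bfact (K + 2) = bk k * bk (k - 1) * bfact K := by
    rw [bfact_succ, bfact_succ, hk_def]
    push_cast
    ring_nf
  have hk : bk k ≠ 0 := bk_ne_zero (by omega)
  have hk' : bk (k - 1) ≠ 0 := bk_ne_zero (by omega)
  have hK := bfact_ne_zero K
  rw [bbinom, bbinom, bbinom, bbinom, hup, hdown, hmid, hfact]
  field_simp
  linear_combination bkp (a - 1) K * bk_add_one_mul_bk_add_bk_sub_add_one_mul_bk_sub a k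

noncomputable def chebCoeff (n i : ℕ) : RatFunc ℚ := bbinom ((n : ℤ) + i + 1) (2 * i + 1)

lemma chebCoeff_eq_zero {n i : ℕ} (h : n < i) : chebCoeff n i = 0 := by
  rw [chebCoeff, show (n : ℤ) + i + 1 = ((n + i + 1 : ℕ) : ℤ) by push_cast; rfl]
  exact bbinom_eq_zero_of_lt (by omega)

lemma chebCoeff_add_two_zero (n : ℕ) :
    chebCoeff (n + 2) 0 = bkPlus 1 * chebCoeff (n + 1) 0 - chebCoeff n 0 := by
  have h := bbinom_add_one_one_add_bbinom_sub_one_one ((n : ℤ) + 2)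
  simp only [chebCoeff]
  push_cast
  ring_nf at h ⊢
  linear_combination h

lemma chebCoeff_add_two_succ (n j : ℕ) :
    chebCoeff (n + 2) (j + 1) = chebCoeff (n + 1) j
      + bkPlus (2 * (j + 1) + 1) * chebCoeff (n + 1) (j + 1) - chebCoeff n (j + 1) := by
  have h := bbinom_add_one_add_bbinom_sub_one ((n : ℤ) + j + 3) (2 * j + 1)
  simp only [chebCoeff]
  push_cast at h ⊢
  ring_nf at h ⊢
  linear_combination h

lemma PP_succ (i : ℕ) : PP (i + 1) = PP i * (X - C (bkPlus (2 * i + 1))) := by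
  rw [PP, prod_range_succ, bkPlus, ← zpow_natCast]
  push_cast
  rfl

lemma X_mul_PP (i : ℕ) : X * PP i = PP (i + 1) + C (bkPlus (2 * i + 1)) * PP i := by
  rw [PP_succ]
  ring

noncomputable def chebSum (n : ℕ) : (RatFunc ℚ)[X] :=
  ∑ i ∈ range (n + 1), C (chebCoeff n i) * PP i

lemma chebSum_eq_sum_range {n N : ℕ} (h : n < N) :
    chebSum n = ∑ i ∈ range N, C (chebCoeff n i) * PP i :=
  sum_subset (range_subset_range.2 h) fun i _ hi => by
    rw [chebCoeff_eq_zero (by simpa using hi), C_0, zero_mul]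

lemma chebSum_zero : chebSum 0 = 1 := by
  have h : chebCoeff 0 0 = 1 := by simpa [chebCoeff] using bbinom_self 1
  rw [chebSum, sum_range_one, h, PP, range_zero, prod_empty, C_1, one_mul]

lemma chebSum_one : chebSum 1 = X := by
  have h0 : chebCoeff 1 0 = bkPlus 1 := by
    have h := bk_add_one_add_bk_sub_one 1
    rw [chebCoeff, bbinom_one, div_eq_iff (bk_ne_zero one_pos)]
    norm_num [bk_zero] at h ⊢
    exact h
  have h1 : chebCoeff 1 1 = 1 := by
    simpa [chebCoeff] using bbinom_self 3
  rw [chebSum, sum_range_succ, sum_range_one, h0, h1, PP_succ]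
  simp [PP]

lemma chebSum_add_two (n : ℕ) : chebSum (n + 2) = X * chebSum (n + 1) - chebSum n := by
  have hshift : ∑ i ∈ range (n + 3), (C (chebCoeff (n + 2) i) + C (chebCoeff n i)
        - C (bkPlus (2 * i + 1) * chebCoeff (n + 1) i)) * PP i
      = ∑ i ∈ range (n + 3), C (chebCoeff (n + 1) i) * PP (i + 1) := by
    rw [sum_range_succ', sum_range_succ _ (n + 2), chebCoeff_eq_zero (Nat.lt_succ_self _)]
    simp only [chebCoeff_add_two_zero, chebCoeff_add_two_succ]
    simp
  have hX : X * ∑ i ∈ range (n + 3), C (chebCoeff (n + 1) i) * PP i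
      = ∑ i ∈ range (n + 3), C (chebCoeff (n + 1) i) * PP (i + 1)
        + ∑ i ∈ range (n + 3), C (bkPlus (2 * i + 1) * chebCoeff (n + 1) i) * PP i := by
    rw [mul_sum, ← sum_add_distrib]
    refine sum_congr rfl fun i _ => ?_
    rw [C_mul, mul_left_comm, X_mul_PP]
    ring
  rw [chebSum_eq_sum_range (by omega : n + 2 < n + 3),
    chebSum_eq_sum_range (by omega : n + 1 < n + 3), chebSum_eq_sum_range (by omega : n < n + 3),
    hX, ← hshift, ← sum_add_distrib, ← sum_sub_distrib]
  refine sum_congr rfl fun i _ => ?_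
  ring

theorem stmt3 (n : ℕ) :
    chebV n = ∑ i ∈ Finset.range (n + 1),
      Polynomial.C (bbinom ((n : ℤ) + i + 1) (2 * i + 1)) * PP i := by
  change chebV n = chebSum n
  induction n using Nat.twoStepInduction with
  | zero => rw [chebSum_zero, chebV]
  | one => rw [chebSum_one, chebV]
  | more n ih₀ ih₁ => rw [chebV, ih₀, ih₁, chebSum_add_two]
end

section
/- Let x ∈ ℤ_p be a unit (|x|_p = 1). Then the sequence (x)_n = ∏_{i=1}^{n}(1 − x^i) converges to 0 in ℤ_p as n → ∞. -/
/-! A unit `x` of `ℤ_[p]` reduces to a nonzero element of `𝔽_p`, so `x ^ k ≡ 1 mod p` whenever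
`p - 1 ∣ k` by Fermat's little theorem. Hence among the factors `1 - x ^ i` with `i ≤ n`, at least
`⌊n / (p - 1)⌋` have norm at most `p⁻¹`, and all others have norm at most `1`, which gives
`‖(x)_n‖ ≤ p ^ (-⌊n / (p - 1)⌋)`. -/

open Filter Finset Topology

theorem Finset.prod_range_le_pow_div {a : ℕ → ℝ} {c : ℝ} {q : ℕ} (ha₀ : ∀ i, 0 ≤ a i)
    (ha₁ : ∀ i, a i ≤ 1) (hac : ∀ i, q ∣ i + 1 → a i ≤ c) (n : ℕ) :
    ∏ i ∈ range n, a i ≤ c ^ (n / q) := by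
  calc ∏ i ∈ range n, a i
      ≤ ∏ i ∈ range n with q ∣ i + 1, a i :=
        prod_le_prod_of_subset_of_le_one (filter_subset _ _) (fun i _ => ha₀ i)
          (fun i _ _ => ha₁ i)
    _ ≤ ∏ i ∈ range n with q ∣ i + 1, c :=
        prod_le_prod (fun i _ => ha₀ i) (fun i hi => hac i (mem_filter.mp hi).2)
    _ = c ^ (n / q) := by rw [prod_const, Nat.card_multiples]

theorem tendsto_pow_div_atTop_nhds_zero {c : ℝ} (hc₀ : 0 ≤ c) (hc₁ : c < 1) {q : ℕ}
    (hq : q ≠ 0) : Tendsto (fun n => c ^ (n / q)) atTop (𝓝 0) :=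
  (tendsto_pow_atTop_nhds_zero_of_lt_one hc₀ hc₁).comp (Nat.tendsto_div_const_atTop hq)

theorem PadicInt.norm_one_sub_pow_le_of_dvd {p : ℕ} [Fact p.Prime] {x : ℤ_[p]} (hx : ‖x‖ = 1)
    {k : ℕ} (hk : p - 1 ∣ k) : ‖1 - x ^ k‖ ≤ (p : ℝ)⁻¹ := by
  obtain ⟨m, rfl⟩ := hk
  have hx_ne : toZMod x ≠ 0 := ((isUnit_iff.mpr hx).map toZMod).ne_zero
  have hker : 1 - x ^ ((p - 1) * m) ∈ Ideal.span {(p : ℤ_[p]) ^ 1} := by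
    rw [pow_one, ← maximalIdeal_eq_span_p, ← ker_toZMod, RingHom.mem_ker, map_sub, map_one,
      map_pow, pow_mul, ZMod.pow_card_sub_one_eq_one hx_ne, one_pow, sub_self]
  simpa using (norm_le_pow_iff_mem_span_pow _ 1).mpr hker

theorem stmt13 (p : ℕ) [Fact p.Prime] (x : ℤ_[p]) (hx : ‖x‖ = 1) :
    Filter.Tendsto (fun n => ∏ i ∈ Finset.range n, (1 - x ^ (i + 1)))
      Filter.atTop (nhds 0) := by
  have hp : 1 < p := Fact.out (p := p.Prime) |>.one_lt
  have hbound (n : ℕ) :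
      ‖∏ i ∈ range n, (1 - x ^ (i + 1))‖ ≤ (p : ℝ)⁻¹ ^ (n / (p - 1)) := by
    rw [norm_prod]
    exact prod_range_le_pow_div (fun _ => norm_nonneg _) (fun _ => PadicInt.norm_le_one _)
      (fun _ => PadicInt.norm_one_sub_pow_le_of_dvd hx) n
  rw [tendsto_zero_iff_norm_tendsto_zero]
  refine squeeze_zero (fun _ => norm_nonneg _) hbound ?_
  exact tendsto_pow_div_atTop_nhds_zero (by positivity)
    (inv_lt_one_of_one_lt₀ (by exact_mod_cast hp)) (by omega)
end

section
/- The ring homomorphism ℤ[[T]] → ∏_{p odd prime} ℤ_p[ζ_p] given by sending a power series f(T) = Σ x_n T^n to the family of values (Σ_n x_n (ζ_p − 1)^n)_p, where ζ_p is a primitive p-th root of unity and the series converges (ζ_p − 1)-adically in ℤ_p[ζ_p], is injective. -/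
open Polynomial in
/-- If `ζ - 1` divides an integer `x` in `ℤ[ζ]` for `ζ` a primitive `p`-th root of unity,
then `p ∣ x` in `ℤ`. -/
lemma key_dvd (p : ℕ) (hp : p.Prime) (ζ : ℂ) (hζ : IsPrimitiveRoot ζ p) (x : ℤ)
    (hd : ∃ c : ℂ, c ∈ Algebra.adjoin ℤ ({ζ} : Set ℂ) ∧ (x : ℂ) = (ζ - 1) * c) :
    (p : ℤ) ∣ x := by
  obtain ⟨c, hc, hxc⟩ := hd
  rw [Algebra.adjoin_singleton_eq_range_aeval] at hc
  obtain ⟨g, hg⟩ := hc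
  have hζint : IsIntegral ℤ ζ := hζ.isIntegral hp.pos
  set q : ℤ[X] := C x - (X - 1) * g with hq
  have hg' : aeval ζ g = c := hg
  have haq : aeval ζ q = 0 := by
    simp [hq, map_sub, map_mul, hg', ← hxc]
  have hdvd : minpoly ℤ ζ ∣ q := minpoly.isIntegrallyClosed_dvd hζint haq
  rw [← Polynomial.cyclotomic_eq_minpoly hζ hp.pos] at hdvd
  obtain ⟨r, hr⟩ := hdvd
  haveI : Fact p.Prime := ⟨hp⟩
  have hev := congrArg (Polynomial.eval 1) hr
  rw [hq] at hev
  simp only [Polynomial.eval_mul, Polynomial.eval_sub, Polynomial.eval_C, Polynomial.eval_one,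
    Polynomial.eval_X, Polynomial.eval_one_cyclotomic_prime, sub_self, zero_mul,
    sub_zero] at hev
  exact ⟨r.eval 1, hev⟩

theorem stmt14 (f : PowerSeries ℤ)
    (h : ∀ p : ℕ, p.Prime → Odd p → ∀ ζ : ℂ, IsPrimitiveRoot ζ p → ∀ k : ℕ,
      ((⟨ζ, Algebra.subset_adjoin (Set.mem_singleton ζ)⟩ :
          Algebra.adjoin ℤ ({ζ} : Set ℂ)) - 1) ^ k ∣
        ∑ n ∈ Finset.range k,
          ((PowerSeries.coeff (R := ℤ) n f : ℤ) : Algebra.adjoin ℤ ({ζ} : Set ℂ)) *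
            ((⟨ζ, Algebra.subset_adjoin (Set.mem_singleton ζ)⟩ :
              Algebra.adjoin ℤ ({ζ} : Set ℂ)) - 1) ^ n) :
    f = 0 := by
  by_contra hf
  have hex : ∃ n, PowerSeries.coeff (R := ℤ) n f ≠ 0 := by
    by_contra hall
    push_neg at hall
    exact hf (PowerSeries.ext fun n => by simp [hall n])
  classical
  let m := Nat.find hex
  have hm : PowerSeries.coeff (R := ℤ) m f ≠ 0 := Nat.find_spec hex
  have hmin : ∀ n < m, PowerSeries.coeff (R := ℤ) n f = 0 := fun n hn => by
    by_contra hn'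
    exact absurd hn (Nat.find_min' hex hn' |>.not_gt)
  set x : ℤ := PowerSeries.coeff (R := ℤ) m f with hx
  -- choose an odd prime p > |x|
  obtain ⟨p, hple, hp⟩ := Nat.exists_infinite_primes (x.natAbs + 3)
  have hodd : Odd p := hp.odd_of_ne_two (by omega)
  have hppos : p ≠ 0 := hp.pos.ne'
  obtain ⟨ζ, hζ⟩ : ∃ ζ : ℂ, IsPrimitiveRoot ζ p :=
    ⟨_, Complex.isPrimitiveRoot_exp p hppos⟩
  have hdvd := h p hp hodd ζ hζ (m + 1)
  set R := Algebra.adjoin ℤ ({ζ} : Set ℂ)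
  set z : R := ⟨ζ, Algebra.subset_adjoin (Set.mem_singleton ζ)⟩ with hz
  have hsum : (∑ n ∈ Finset.range (m + 1),
      ((PowerSeries.coeff (R := ℤ) n f : ℤ) : R) * (z - 1) ^ n) = (x : R) * (z - 1) ^ m := by
    rw [Finset.sum_range_succ]
    have : (∑ n ∈ Finset.range m, ((PowerSeries.coeff (R := ℤ) n f : ℤ) : R) * (z - 1) ^ n) = 0 :=
      Finset.sum_eq_zero fun n hn => by
        rw [hmin n (Finset.mem_range.mp hn)]; simp
    rw [this, zero_add]
  rw [hsum, pow_succ] at hdvd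
  obtain ⟨c, hc⟩ := hdvd
  have hzne : z - 1 ≠ 0 := by
    intro h0
    have : ζ - 1 = 0 := congrArg Subtype.val h0
    have hζ1 : ζ ≠ 1 := hζ.ne_one (by omega)
    exact hζ1 (by linear_combination this)
  have hpow : (z - 1) ^ m ≠ 0 := pow_ne_zero m hzne
  have hxz : (x : R) = (z - 1) * c := by
    have := hc
    rw [mul_assoc] at this
    exact mul_right_cancel₀ hpow (by rw [this]; ring)
  have hpdvd : (p : ℤ) ∣ x := by
    apply key_dvd p hp ζ hζ x
    refine ⟨(c : ℂ), c.2, ?_⟩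
    have := congrArg Subtype.val hxz
    simpa using this
  have : x = 0 := by
    have habs : |x| < (p : ℤ) := by
      rw [Int.abs_eq_natAbs]
      exact_mod_cast by omega
    exact Int.eq_zero_of_abs_lt_dvd hpdvd habs
  exact hm this
end

section
/- Let ζ and ξ be roots of unity in ℂ such that the order of ζξ⁻¹ is neither 1 nor a prime power. Then ζ − ξ is a unit in the ring ℤ[ζ, ξ]. -/
/-! Write `ζ - ξ = -ξ (1 - ω)` with `ω = ζ ξ⁻¹`; `ξ` is a unit, and `ω` is a root of the
cyclotomic polynomial `Φ_k`. Since `Φ_k(1) = 1` when `k` is not a prime power, `1 - ω` divides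
`Φ_k(1) - Φ_k(ω) = 1`. -/

open Polynomial

theorem isUnit_one_sub_of_isRoot_cyclotomic {R : Type*} [CommRing R] {k : ℕ} {ω : R}
    (hk1 : k ≠ 1) (hkp : ¬IsPrimePow k) (hω : (cyclotomic k R).IsRoot ω) : IsUnit (1 - ω) := by
  have hone : eval 1 (cyclotomic k R) = 1 := by
    refine eval_one_cyclotomic_not_prime_pow fun {p} hp j hj => ?_
    cases j with
    | zero => exact hk1 (by simpa using hj.symm)
    | succ j => exact hkp ⟨p, j + 1, hp.prime, j.succ_pos, hj⟩
  have hdvd := sub_dvd_eval_sub 1 ω (cyclotomic k R)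
  rw [hone, hω.eq_zero, sub_zero] at hdvd
  exact isUnit_of_dvd_one hdvd

theorem mul_inv_pow_mul_eq_one {M : Type*} [DivisionCommMonoid M] {a b : M} {m n : ℕ}
    (ha : a ^ m = 1) (hb : b ^ n = 1) : (a * b⁻¹) ^ (m * n) = 1 := by
  rw [mul_pow, inv_pow, pow_mul, ha, one_pow, one_mul, mul_comm, pow_mul, hb, one_pow, inv_one]

theorem stmt17 (ζ ξ : ℂ) (m n k : ℕ) (hm : 0 < m) (hn : 0 < n)
    (hζ : IsPrimitiveRoot ζ m) (hξ : IsPrimitiveRoot ξ n)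
    (hk : IsPrimitiveRoot (ζ * ξ⁻¹) k) (hk1 : k ≠ 1) (hkp : ¬ IsPrimePow k) :
    IsUnit (⟨ζ - ξ,
      sub_mem (Algebra.subset_adjoin (Set.mem_insert ζ {ξ}))
        (Algebra.subset_adjoin (Set.mem_insert_of_mem ζ rfl))⟩ :
      Algebra.adjoin ℤ ({ζ, ξ} : Set ℂ)) := by
  set A := Algebra.adjoin ℤ ({ζ, ξ} : Set ℂ)
  let ζ' : A := ⟨ζ, Algebra.subset_adjoin (Set.mem_insert ζ {ξ})⟩
  let ξ' : A := ⟨ξ, Algebra.subset_adjoin (Set.mem_insert_of_mem ζ rfl)⟩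
  have hξ' : IsUnit ξ' := IsUnit.of_pow_eq_one (n := n) (Subtype.ext hξ.pow_eq_one) hn.ne'
  let ω' : A := ζ' * ↑hξ'.unit⁻¹
  have hω' : IsPrimitiveRoot ω' k :=
    .of_map_of_injective (f := A.val)
      (by rwa [map_mul, map_units_inv A.val hξ'.unit]) Subtype.val_injective
  have hk0 : 0 < k := Nat.pos_of_dvd_of_pos
    (hk.dvd_of_pow_eq_one _ (mul_inv_pow_mul_eq_one hζ.pow_eq_one hξ.pow_eq_one))
    (Nat.mul_pos hm hn)
  have hdiff : (⟨ζ - ξ, sub_mem ζ'.2 ξ'.2⟩ : A) = -(ξ' * (1 - ω')) := by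
    rw [mul_sub, mul_one, neg_sub, mul_left_comm, IsUnit.mul_val_inv, mul_one]
    rfl
  rw [hdiff]
  exact (hξ'.mul (isUnit_one_sub_of_isRoot_cyclotomic hk1 hkp (hω'.isRoot_cyclotomic hk0))).neg
end
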